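/- arXiv:1801.08307 — 6 statements merged into one kernel-verified Lean document; each statement's English description precedes it below -/
import Mathlib

section
/- For the Lie algebra g₄,₅ with orthonormal basis metric, the curvature tensor R(x,y)z = ∇_x∇_y z − ∇_y∇_x z − ∇_{[x,y]}z has (0,4)-components R₁₂₁₂ = a, R₁₃₁₃ = b, R₁₄₁₄ = 1, R₂₃₂₃ = ab, R₂₄₂₄ = a², R₃₄₃₄ = b², and all components not obtained from these by the symmetries of R vanish. -/
noncomputable section
open Matrix BigOperators

/-- ℝ⁴ -/
abbrev V : Type := Fin 4 → ℝ

/-- standard basis -/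
def e (i : Fin 4) : V := Pi.single i 1

/-- standard Euclidean inner product, `g(eᵢ,eⱼ) = δᵢⱼ` -/
def gdot (x y : V) : ℝ := ∑ i, x i * y i

/-- the cyclic shift `Q e₁ = e₄, Q e₂ = e₁, Q e₃ = e₂, Q e₄ = e₃` -/
def Qv (x : V) : V := fun i => x (i + 1)

/-- `P = Q²` -/
def Pv (x : V) : V := Qv (Qv x)

/-- the bracket of the family g₄,₅ : `[e₁,e₄]=e₁, [e₂,e₄]=a e₂, [e₃,e₄]=b e₃`,
extended bilinearly and antisymmetrically -/
def br45 (a b : ℝ) (x y : V) : V :=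
  (x 0 * y 3 - x 3 * y 0) • e 0 + (a * (x 1 * y 3 - x 3 * y 1)) • e 1
    + (b * (x 2 * y 3 - x 3 * y 2)) • e 2

/-- the bracket of the family g₄,₆ : `[e₁,e₄]=a e₁, [e₂,e₄]=b e₂ − e₃, [e₃,e₄]=e₂ + b e₃` -/
def br46 (a b : ℝ) (x y : V) : V :=
  (a * (x 0 * y 3 - x 3 * y 0)) • e 0
    + (b * (x 1 * y 3 - x 3 * y 1) + (x 2 * y 3 - x 3 * y 2)) • e 1
    + (-(x 1 * y 3 - x 3 * y 1) + b * (x 2 * y 3 - x 3 * y 2)) • e 2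

/-- the Levi-Civita connection of left invariant vector fields via the Koszul formula
`2 g(∇ₓy, z) = g([x,y],z) + g([z,x],y) + g([z,y],x)`, using that `{eₖ}` is orthonormal -/
def koszul (br : V → V → V) (x y : V) : V :=
  fun k => (gdot (br x y) (e k) + gdot (br (e k) x) y + gdot (br (e k) y) x) / 2

/-- the (0,4) curvature tensor `R(x,y,z,u) = g(∇ₓ∇_y z − ∇_y∇ₓ z − ∇_{[x,y]} z, u)` -/
def curv (br : V → V → V) (x y z u : V) : ℝ :=
  gdot (koszul br x (koszul br y z) - koszul br y (koszul br x z) - koszul br (br x y) z) u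

/-- `F(x,y,z) = g((∇ₓP)y, z)` -/
def Ften (br : V → V → V) (x y z : V) : ℝ :=
  gdot (koszul br x (Pv y) - Pv (koszul br x y)) z

/-- the Lee form `θ(x) = gⁱʲ F(eᵢ,eⱼ,x)` -/
def theta (br : V → V → V) (x : V) : ℝ := ∑ i, Ften br (e i) (e i) x

def wedge (x y : V) (p q : Fin 4) : ℝ := x p * y q - x q * y p

/-- The bracket of `ℝ³ ⋊ ℝ` where `e₄` acts on `ℝ³` by `diag(l₀, l₁, l₂)`. -/
def diagBracket (l₀ l₁ l₂ : ℝ) (x y : V) : V :=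
  (l₀ * wedge x y 0 3) • e 0 + (l₁ * wedge x y 1 3) • e 1 + (l₂ * wedge x y 2 3) • e 2

lemma br45_eq_diagBracket (a b : ℝ) : br45 a b = diagBracket 1 a b := by
  ext x y k
  simp [br45, diagBracket, wedge]

/-- The curvature operator is diagonal in the basis `eₚ ∧ e_q`. -/
lemma curv_diagBracket (l₀ l₁ l₂ : ℝ) (x y z u : V) :
    curv (diagBracket l₀ l₁ l₂) x y z u =
      l₀ * l₁ * (wedge x y 0 1 * wedge z u 0 1) + l₀ * l₂ * (wedge x y 0 2 * wedge z u 0 2)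
        + l₀ ^ 2 * (wedge x y 0 3 * wedge z u 0 3) + l₁ * l₂ * (wedge x y 1 2 * wedge z u 1 2)
        + l₁ ^ 2 * (wedge x y 1 3 * wedge z u 1 3) + l₂ ^ 2 * (wedge x y 2 3 * wedge z u 2 3) := by
  simp [curv, koszul, gdot, diagBracket, wedge, e, Fin.sum_univ_four, Pi.single_apply]
  ring

lemma wedge_e_e (i j p q : Fin 4) :
    wedge (e i) (e j) p q = (if p = i ∧ q = j then 1 else 0) - (if p = j ∧ q = i then 1 else 0) := by
  simp [wedge, e, Pi.single_apply, ← ite_and, and_comm]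

lemma wedge_e_e_ne_zero {i j p q : Fin 4} (h : wedge (e i) (e j) p q ≠ 0) :
    i ≠ j ∧ ({i, j} : Finset (Fin 4)) = {p, q} := by
  rw [wedge_e_e] at h
  split_ifs at h with h₁ h₂ h₂
  · exact absurd (sub_self (1 : ℝ)) h
  · obtain ⟨rfl, rfl⟩ := h₁
    exact ⟨fun hij => h₂ ⟨hij ▸ rfl, hij ▸ rfl⟩, rfl⟩
  · obtain ⟨rfl, rfl⟩ := h₂
    exact ⟨fun hij => h₁ ⟨hij ▸ rfl, hij ▸ rfl⟩, Finset.pair_comm _ _⟩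
  · exact absurd (sub_self (0 : ℝ)) h

lemma wedge_e_e_mul_wedge_e_e_eq_zero {i j k s : Fin 4}
    (h : ¬(i ≠ j ∧ ({i, j} : Finset (Fin 4)) = {k, s})) (p q : Fin 4) :
    wedge (e i) (e j) p q * wedge (e k) (e s) p q = 0 := by
  by_contra hne
  obtain ⟨hij, hpq⟩ := wedge_e_e_ne_zero (left_ne_zero_of_mul hne)
  exact h ⟨hij, hpq.trans (wedge_e_e_ne_zero (right_ne_zero_of_mul hne)).2.symm⟩

theorem stmt7 (a b : ℝ) :
    curv (br45 a b) (e 0) (e 1) (e 0) (e 1) = a ∧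
    curv (br45 a b) (e 0) (e 2) (e 0) (e 2) = b ∧
    curv (br45 a b) (e 0) (e 3) (e 0) (e 3) = 1 ∧
    curv (br45 a b) (e 1) (e 2) (e 1) (e 2) = a * b ∧
    curv (br45 a b) (e 1) (e 3) (e 1) (e 3) = a ^ 2 ∧
    curv (br45 a b) (e 2) (e 3) (e 2) (e 3) = b ^ 2 ∧
    ∀ i j k s : Fin 4, ¬(i ≠ j ∧ ({i, j} : Finset (Fin 4)) = {k, s}) →
      curv (br45 a b) (e i) (e j) (e k) (e s) = 0 := by
  simp only [br45_eq_diagBracket, curv_diagBracket]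
  refine ⟨?_, ?_, ?_, ?_, ?_, ?_, fun i j k s h => by
    simp [wedge_e_e_mul_wedge_e_e_eq_zero h]⟩ <;> simp [wedge_e_e]
end
end

section
/- For g₄,₅ with −1 ≤ b ≤ a ≤ 1 and ab ≠ 0, the curvature tensor satisfies R(Qx,Qy,Qz,Qu) = R(x,y,z,u) for all x,y,z,u if and only if a = b = 1, where Q is the cyclic structure Qe₁=e₄, Qe₂=e₁, Qe₃=e₂, Qe₄=e₃. -/
noncomputable section
open Matrix BigOperators

/-!
The shift `Q` permutes the orthonormal basis, so invariance of `R` under `Q` forces equalities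
between sectional curvatures of coordinate planes. For `g₄,₅` these are `-1` on `⟨e 0, e 3⟩`,
`-a²` on `⟨e 1, e 3⟩`, `-b²` on `⟨e 2, e 3⟩` and `-b` on `⟨e 0, e 2⟩`; comparing the planes
that `Q` exchanges gives `b² = 1` and `b = a²`, hence `a = b = 1` once `b ≤ a`. Conversely, for
`a = b = 1` the metric has constant curvature `-1` and `Q` is orthogonal.
-/

lemma gdot_Qv_Qv (x y : V) : gdot (Qv x) (Qv y) = gdot x y :=
  Fintype.sum_equiv (Equiv.addRight 1) _ _ fun _ => rfl

lemma Qv_e (i : Fin 4) : Qv (e i) = e (i - 1) := by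
  funext j
  simp only [Qv, e, Pi.single_apply, eq_sub_iff_add_eq]

section LeviCivita

variable (a b : ℝ)

lemma koszul_br45 (x y : V) :
    koszul (br45 a b) x y =
      ![x 0 * y 3, a * x 1 * y 3, b * x 2 * y 3, -(x 0 * y 0 + a * x 1 * y 1 + b * x 2 * y 2)] := by
  funext k
  fin_cases k <;> simp [koszul, br45, gdot, e, Fin.sum_univ_four] <;> ring

lemma curv_br45_one_one (x y z u : V) :
    curv (br45 1 1) x y z u = gdot x z * gdot y u - gdot y z * gdot x u := by
  simp only [curv, gdot, koszul_br45, br45, e, Fin.sum_univ_four, Pi.sub_apply, Pi.add_apply,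
    Pi.smul_apply, smul_eq_mul, Pi.single_apply, Matrix.cons_val, Fin.reduceEq, if_true, if_false]
  ring

lemma curv_br45_e_zero_e_three : curv (br45 a b) (e 0) (e 3) (e 3) (e 0) = -1 := by
  simp [curv, koszul_br45, br45, gdot, Fin.sum_univ_four, e]

lemma curv_br45_e_one_e_three : curv (br45 a b) (e 1) (e 3) (e 3) (e 1) = -a * a := by
  simp [curv, koszul_br45, br45, gdot, Fin.sum_univ_four, e]

lemma curv_br45_e_three_e_two : curv (br45 a b) (e 3) (e 2) (e 2) (e 3) = -b * b := by
  simp [curv, koszul_br45, br45, gdot, Fin.sum_univ_four, e]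

lemma curv_br45_e_zero_e_two : curv (br45 a b) (e 0) (e 2) (e 2) (e 0) = -b := by
  simp [curv, koszul_br45, br45, gdot, Fin.sum_univ_four, e]

end LeviCivita

theorem stmt8_general (a b : ℝ) (h2 : b ≤ a) :
    (∀ x y z u : V,
      curv (br45 a b) (Qv x) (Qv y) (Qv z) (Qv u) = curv (br45 a b) x y z u) ↔
    (a = 1 ∧ b = 1) := by
  constructor
  · intro h
    have hQ (i j : Fin 4) : curv (br45 a b) (e (i - 1)) (e (j - 1)) (e (j - 1)) (e (i - 1)) =
        curv (br45 a b) (e i) (e j) (e j) (e i) := by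
      simpa only [Qv_e] using h (e i) (e j) (e j) (e i)
    have hb_sq : -b * b = -1 := by
      rw [← curv_br45_e_three_e_two a b, ← curv_br45_e_zero_e_three a b]
      exact hQ 0 3
    have hb_eq : -b = -a * a := by
      rw [← curv_br45_e_zero_e_two a b, ← curv_br45_e_one_e_three a b]
      exact hQ 1 3
    have hb : b = 1 := by nlinarith [mul_self_nonneg a]
    have ha : a = 1 := by nlinarith
    exact ⟨ha, hb⟩
  · rintro ⟨rfl, rfl⟩ x y z u
    simp only [curv_br45_one_one, gdot_Qv_Qv]

theorem stmt8 (a b : ℝ) (h1 : -1 ≤ b) (h2 : b ≤ a) (h3 : a ≤ 1) (h4 : a * b ≠ 0) :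
    (∀ x y z u : V,
      curv (br45 a b) (Qv x) (Qv y) (Qv z) (Qv u) = curv (br45 a b) x y z u) ↔
    (a = 1 ∧ b = 1) :=
  stmt8_general a b h2
end
end

section
/- The Q-invariance condition R(Qx,Qy,Qz,Qu) = R(x,y,z,u) for all vectors is equivalent to the system of component equations: R₁₂₁₂=R₃₄₃₄=R₂₃₂₃=R₁₄₁₄, R₁₃₁₃=R₂₄₂₄, R₁₂₁₃=R₂₃₂₄=R₁₄₂₄=R₃₁₃₄, R₁₂₁₄=R₁₄₃₄=R₂₁₂₃=R₃₂₃₄, R₁₂₂₄=R₃₁₂₃=R₃₁₁₄=R₄₂₃₄, R₁₃₂₄=0. -/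
noncomputable section
open Matrix BigOperators

/-- the quadrilinear extension of a (0,4)-tensor given by its components -/
def Tq (R : Fin 4 → Fin 4 → Fin 4 → Fin 4 → ℝ) (x y z u : V) : ℝ :=
  ∑ i, ∑ j, ∑ k, ∑ s, x i * y j * z k * u s * R i j k s

/-!
`Q` permutes the standard basis, `Q e_{i+1} = e_i` (indices mod 4), so `Q`-invariance of the
quadrilinear form is the invariance `R_{i+1,j+1,k+1,s+1} = R_{ijks}` of its components. Each of
the listed equations is a chain of such shift relations, read modulo the symmetries of `R`.
Conversely, a tensor with the pair symmetries is determined by its components `R_{abcd}` with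
`a < b`, `c < d`, `(a,b) ≤ (c,d)`, so the shifted tensor equals `R` once the two agree there; on
these 21 components this is a rearrangement of the listed equations, except for `R_{0123}` and
`R_{0312}`, where the Bianchi identity and `R_{0213} = 0` are needed.
-/

structure IsPairSymmetric {ι : Type*} (R : ι → ι → ι → ι → ℝ) : Prop where
  antisymm_left : ∀ i j k s, R j i k s = -R i j k s
  antisymm_right : ∀ i j k s, R i j s k = -R i j k s
  swap_pairs : ∀ i j k s, R k s i j = R i j k s

namespace IsPairSymmetric

variable {ι : Type*} {R S : ι → ι → ι → ι → ℝ}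

theorem apply_self_left (hR : IsPairSymmetric R) (i k s : ι) : R i i k s = 0 := by
  linarith [hR.antisymm_left i i k s]

theorem apply_self_right (hR : IsPairSymmetric R) (i j k : ι) : R i j k k = 0 := by
  linarith [hR.antisymm_right i j k k]

theorem comp {κ : Type*} (hR : IsPairSymmetric R) (f : κ → ι) :
    IsPairSymmetric fun i j k s => R (f i) (f j) (f k) (f s) where
  antisymm_left i j k s := hR.antisymm_left (f i) (f j) (f k) (f s)
  antisymm_right i j k s := hR.antisymm_right (f i) (f j) (f k) (f s)
  swap_pairs i j k s := hR.swap_pairs (f i) (f j) (f k) (f s)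

theorem eq_of_forall_lex [LinearOrder ι] (hR : IsPairSymmetric R) (hS : IsPairSymmetric S)
    (h : ∀ a b c d, a < b → c < d → toLex (a, b) ≤ toLex (c, d) → R a b c d = S a b c d)
    (i j k s : ι) : R i j k s = S i j k s := by
  have h_lt : ∀ a b c d, a < b → c < d → R a b c d = S a b c d := by
    intro a b c d hab hcd
    rcases le_total (toLex (a, b)) (toLex (c, d)) with hle | hle
    · exact h a b c d hab hcd hle
    · rw [← hR.swap_pairs, ← hS.swap_pairs]
      exact h c d a b hcd hab hle
  have h_right_lt : ∀ a b c d, c < d → R a b c d = S a b c d := by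
    intro a b c d hcd
    rcases lt_trichotomy a b with hab | rfl | hab
    · exact h_lt a b c d hab hcd
    · rw [hR.apply_self_left, hS.apply_self_left]
    · rw [← neg_neg (R a b c d), ← neg_neg (S a b c d), ← hR.antisymm_left, ← hS.antisymm_left,
        h_lt b a c d hab hcd]
  rcases lt_trichotomy k s with hks | rfl | hks
  · exact h_right_lt i j k s hks
  · rw [hR.apply_self_right, hS.apply_self_right]
  · rw [← neg_neg (R i j k s), ← neg_neg (S i j k s), ← hR.antisymm_right, ← hS.antisymm_right,
      h_right_lt i j s k hks]

end IsPairSymmetric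

theorem Qv_single (i : Fin 4) : Qv (e (i + 1)) = e i := by
  funext j
  simp [Qv, e, Pi.single_apply]

theorem Tq_single (R : Fin 4 → Fin 4 → Fin 4 → Fin 4 → ℝ) (a b c d : Fin 4) :
    Tq R (e a) (e b) (e c) (e d) = R a b c d := by
  simp [Tq, e, Pi.single_apply]

theorem Tq_shift_Qv (R : Fin 4 → Fin 4 → Fin 4 → Fin 4 → ℝ) (x y z u : V) :
    Tq (fun i j k s => R (i + 1) (j + 1) (k + 1) (s + 1)) (Qv x) (Qv y) (Qv z) (Qv u) =
      Tq R x y z u := by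
  simp only [Tq, Qv]
  exact Fintype.sum_equiv (Equiv.addRight 1) _ _ fun i =>
    Fintype.sum_equiv (Equiv.addRight 1) _ _ fun j =>
      Fintype.sum_equiv (Equiv.addRight 1) _ _ fun k =>
        Fintype.sum_equiv (Equiv.addRight 1) _ _ fun s => rfl

theorem Tq_Qv_invariant_iff (R : Fin 4 → Fin 4 → Fin 4 → Fin 4 → ℝ) :
    (∀ x y z u : V, Tq R (Qv x) (Qv y) (Qv z) (Qv u) = Tq R x y z u) ↔
      ∀ i j k s, R (i + 1) (j + 1) (k + 1) (s + 1) = R i j k s := by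
  constructor
  · intro h i j k s
    simpa only [Qv_single, Tq_single] using
      (h (e (i + 1)) (e (j + 1)) (e (k + 1)) (e (s + 1))).symm
  · intro h x y z u
    rw [← Tq_shift_Qv R x y z u]
    simp only [h]

/-- The paper's equations, with indices `0, …, 3` in place of `1, …, 4`. -/
def CyclicComponentEquations (R : Fin 4 → Fin 4 → Fin 4 → Fin 4 → ℝ) : Prop :=
  R 0 1 0 1 = R 2 3 2 3 ∧ R 2 3 2 3 = R 1 2 1 2 ∧ R 1 2 1 2 = R 0 3 0 3 ∧
    R 0 2 0 2 = R 1 3 1 3 ∧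
    R 0 1 0 2 = R 1 2 1 3 ∧ R 1 2 1 3 = R 0 3 1 3 ∧ R 0 3 1 3 = R 2 0 2 3 ∧
    R 0 1 0 3 = R 0 3 2 3 ∧ R 0 3 2 3 = R 1 0 1 2 ∧ R 1 0 1 2 = R 2 1 2 3 ∧
    R 0 1 1 3 = R 2 0 1 2 ∧ R 2 0 1 2 = R 2 0 0 3 ∧ R 2 0 0 3 = R 3 1 2 3 ∧
    R 0 2 1 3 = 0

section

variable {R : Fin 4 → Fin 4 → Fin 4 → Fin 4 → ℝ}

theorem cyclicComponentEquations_of_shift_invariant (hR : IsPairSymmetric R)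
    (h : ∀ i j k s, R (i + 1) (j + 1) (k + 1) (s + 1) = R i j k s) :
    CyclicComponentEquations R := by
  obtain ⟨hA1, hA2, hP⟩ := hR
  -- restated with numerals: `linarith` does not identify `R (0 + 1) …` with `R 1 …`
  have h0101 : R 1 2 1 2 = R 0 1 0 1 := h 0 1 0 1
  have h0102 : R 1 2 1 3 = R 0 1 0 2 := h 0 1 0 2
  have h0103 : R 1 2 1 0 = R 0 1 0 3 := h 0 1 0 3
  have h0112 : R 1 2 2 3 = R 0 1 1 2 := h 0 1 1 2
  have h0113 : R 1 2 2 0 = R 0 1 1 3 := h 0 1 1 3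
  have h0202 : R 1 3 1 3 = R 0 2 0 2 := h 0 2 0 2
  have h0203 : R 1 3 1 0 = R 0 2 0 3 := h 0 2 0 3
  have h0212 : R 1 3 2 3 = R 0 2 1 2 := h 0 2 1 2
  have h0213 : R 1 3 2 0 = R 0 2 1 3 := h 0 2 1 3
  have h0313 : R 1 0 2 0 = R 0 3 1 3 := h 0 3 1 3
  have h0323 : R 1 0 3 0 = R 0 3 2 3 := h 0 3 2 3
  have h1020 : R 2 1 3 1 = R 1 0 2 0 := h 1 0 2 0
  have h1030 : R 2 1 0 1 = R 1 0 3 0 := h 1 0 3 0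
  have h1210 : R 2 3 2 1 = R 1 2 1 0 := h 1 2 1 0
  have h1212 : R 2 3 2 3 = R 1 2 1 2 := h 1 2 1 2
  have h1213 : R 2 3 2 0 = R 1 2 1 3 := h 1 2 1 3
  have h1310 : R 2 0 2 1 = R 1 3 1 0 := h 1 3 1 0
  have h1323 : R 2 0 3 0 = R 1 3 2 3 := h 1 3 2 3
  have h2021 : R 3 1 3 2 = R 2 0 2 1 := h 2 0 2 1
  have h2131 : R 3 2 0 2 = R 2 1 3 1 := h 2 1 3 1
  have h2320 : R 3 0 3 1 = R 2 3 2 0 := h 2 3 2 0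
  have h2321 : R 3 0 3 2 = R 2 3 2 1 := h 2 3 2 1
  have h2323 : R 3 0 3 0 = R 2 3 2 3 := h 2 3 2 3
  refine ⟨?_, ?_, ?_, ?_, ?_, ?_, ?_, ?_, ?_, ?_, ?_, ?_, ?_, ?_⟩
  · linarith
  · linarith
  · linarith [hA1 0 3 3 0, hA2 0 3 0 3]
  · linarith
  · linarith
  · linarith [hA1 0 3 3 1, hA2 0 3 1 3]
  · linarith [hA1 2 3 0 2, hP 0 2 2 3, hA1 0 2 2 3]
  · linarith [hA1 0 3 3 2, hA2 0 3 2 3]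
  · linarith [hA1 0 1 1 2, hA1 1 2 0 1, hP 0 1 1 2]
  · linarith [hA1 0 1 1 2, hA1 1 2 2 3]
  · linarith [hA1 0 2 1 2, hA2 1 2 0 2, hP 0 2 1 2]
  · linarith [hA1 0 2 1 2, hA1 0 2 3 0, hA2 0 2 0 3, hA1 0 2 0 3]
  · linarith [hA1 0 2 0 3, hA1 1 3 3 2, hA2 1 3 2 3, hA1 1 3 2 3]
  · linarith [hA2 1 3 0 2, hP 0 2 1 3]

theorem shift_invariant_of_cyclicComponentEquations (hR : IsPairSymmetric R)
    (hB : ∀ i j k s, R i j k s + R j k i s + R k i j s = 0) (h : CyclicComponentEquations R)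
    (i j k s : Fin 4) : R (i + 1) (j + 1) (k + 1) (s + 1) = R i j k s := by
  obtain ⟨h1, h2, h3, h4, h5, h6, h7, h8, h9, h10, h11, h12, h13, h14⟩ := h
  have ⟨hA1, hA2, hP⟩ := hR
  refine (hR.comp (· + 1)).eq_of_forall_lex hR (fun a b c d hab hcd hle => ?_) i j k s
  fin_cases a <;> fin_cases b <;> fin_cases c <;> fin_cases d
  all_goals try (exfalso; revert hab hcd hle; decide)
  · show R 1 2 1 2 = R 0 1 0 1; linarith
  · show R 1 2 1 3 = R 0 1 0 2; linarith
  · show R 1 2 1 0 = R 0 1 0 3; linarith [hP 1 0 1 2]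
  · show R 1 2 2 3 = R 0 1 1 2; linarith [hA1 1 2 2 3, hA1 0 1 1 2]
  · show R 1 2 2 0 = R 0 1 1 3; linarith [hP 2 0 1 2]
  · show R 1 2 3 0 = R 0 1 2 3; linarith [hA2 1 2 0 3, hP 0 3 1 2, hB 0 1 2 3, hA1 0 2 1 3]
  · show R 1 3 1 3 = R 0 2 0 2; linarith
  · show R 1 3 1 0 = R 0 2 0 3; linarith [hP 1 0 1 3, hA1 0 1 1 3, hA1 0 2 0 3]
  · show R 1 3 2 3 = R 0 2 1 2; linarith [hA1 1 3 2 3, hA1 0 2 1 2]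
  · show R 1 3 2 0 = R 0 2 1 3; linarith [hA2 1 3 0 2, hP 0 2 1 3]
  · show R 1 3 3 0 = R 0 2 2 3; linarith [hA2 1 3 0 3, hP 0 3 1 3, hA1 0 2 2 3]
  · show R 1 0 1 0 = R 0 3 0 3; linarith [hA1 0 1 1 0, hA2 0 1 0 1]
  · show R 1 0 2 3 = R 0 3 1 2; linarith [hA1 0 1 2 3, hB 0 1 2 3, hP 0 3 1 2, hA1 0 2 1 3]
  · show R 1 0 2 0 = R 0 3 1 3; linarith [hA1 0 1 2 0, hA2 0 1 0 2]
  · show R 1 0 3 0 = R 0 3 2 3; linarith [hA1 0 1 3 0, hA2 0 1 0 3]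
  · show R 2 3 2 3 = R 1 2 1 2; linarith
  · show R 2 3 2 0 = R 1 2 1 3; linarith [hA2 2 3 0 2, hP 0 2 2 3, hA1 0 2 2 3]
  · show R 2 3 3 0 = R 1 2 2 3; linarith [hA2 2 3 0 3, hP 0 3 2 3, hA1 1 2 2 3]
  · show R 2 0 2 0 = R 1 3 1 3; linarith [hA1 0 2 2 0, hA2 0 2 0 2]
  · show R 2 0 3 0 = R 1 3 2 3; linarith [hA1 0 2 3 0, hA2 0 2 0 3, hA1 0 2 0 3, hA1 1 3 2 3]
  · show R 3 0 3 0 = R 2 3 2 3; linarith [hA1 0 3 3 0, hA2 0 3 0 3]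

end

theorem stmt9 (R : Fin 4 → Fin 4 → Fin 4 → Fin 4 → ℝ)
    (hA1 : ∀ i j k s, R j i k s = - R i j k s)
    (hA2 : ∀ i j k s, R i j s k = - R i j k s)
    (hP : ∀ i j k s, R k s i j = R i j k s)
    (hB : ∀ i j k s, R i j k s + R j k i s + R k i j s = 0) :
    (∀ x y z u : V, Tq R (Qv x) (Qv y) (Qv z) (Qv u) = Tq R x y z u) ↔
    (R 0 1 0 1 = R 2 3 2 3 ∧ R 2 3 2 3 = R 1 2 1 2 ∧ R 1 2 1 2 = R 0 3 0 3 ∧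
     R 0 2 0 2 = R 1 3 1 3 ∧
     R 0 1 0 2 = R 1 2 1 3 ∧ R 1 2 1 3 = R 0 3 1 3 ∧ R 0 3 1 3 = R 2 0 2 3 ∧
     R 0 1 0 3 = R 0 3 2 3 ∧ R 0 3 2 3 = R 1 0 1 2 ∧ R 1 0 1 2 = R 2 1 2 3 ∧
     R 0 1 1 3 = R 2 0 1 2 ∧ R 2 0 1 2 = R 2 0 0 3 ∧ R 2 0 0 3 = R 3 1 2 3 ∧
     R 0 2 1 3 = 0) := by
  have hR : IsPairSymmetric R := ⟨hA1, hA2, hP⟩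
  rw [Tq_Qv_invariant_iff]
  exact ⟨cyclicComponentEquations_of_shift_invariant hR,
    shift_invariant_of_cyclicComponentEquations hR hB⟩
end
end

section
/- For g₄,₅ with P = Q², the tensor F(x,y,z) = g((∇_x P)y, z) has nonzero components (up to the listed symmetries) F₁₁₂=F₁₂₁=−F₁₃₄=−F₁₄₃=1, F₂₂₂=−F₂₄₄=2a, F₃₂₃=F₃₃₂=−F₃₄₁=−F₃₁₄=b, and the Lee form θ(x)=g^{ij}F(eᵢ,e_j,x) has only nonzero component θ₂ = 2a+b+1. -/
/-!
The Levi-Civita connection of g₄,₅ is explicit: with `(c₁, c₂, c₃) = (1, a, b)` one has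
`∇_{eᵢ} eᵢ = -cᵢ e₄`, `∇_{eᵢ} e₄ = cᵢ eᵢ` for `i ≤ 3`, and all other `∇_{eᵢ} eⱼ` vanish. Since
`P` is the coordinate permutation `e₁ ↔ e₃, e₂ ↔ e₄`, this makes `F` an explicit trilinear form in
the coordinates, from which its components and the Lee form `θ = (2a + b + 1) g(e₂, ·)` are read
off. The paper's `eᵢ` is `e (i - 1)` here.
-/

noncomputable section
open Matrix BigOperators

section G45

variable (a b : ℝ)

lemma e_apply (i j : Fin 4) : e i j = if j = i then 1 else 0 := Pi.single_apply i 1 j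

lemma Pv_eq (x : V) : Pv x = ![x 2, x 3, x 0, x 1] := by
  funext i
  fin_cases i <;> rfl

lemma Ften_br45 (x y z : V) :
    Ften (br45 a b) x y z =
      (x 0 * y 1 - b * x 2 * y 3) * z 0 + (x 0 * y 0 + 2 * a * x 1 * y 1 + b * x 2 * y 2) * z 1
        + (b * x 2 * y 1 - x 0 * y 3) * z 2 - (x 0 * y 2 + 2 * a * x 1 * y 3 + b * x 2 * y 0) * z 3 := by
  simp only [Ften, koszul_br45, Pv_eq, gdot, Fin.sum_univ_four, Pi.sub_apply, Fin.isValue,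
    cons_val, cons_val_zero, cons_val_one]
  ring

lemma theta_br45 (x : V) : theta (br45 a b) x = (2 * a + b + 1) * x 1 := by
  simp only [theta, Ften_br45, Fin.isValue, e_apply, mul_ite, mul_one, mul_zero,
    Finset.sum_sub_distrib, Fin.sum_univ_four, one_ne_zero, ↓reduceIte, Fin.reduceEq, sub_self,
    zero_mul, add_zero, one_mul, zero_add, zero_ne_one, sub_zero]
  ring

end G45

theorem stmt10 (a b : ℝ) :
    Ften (br45 a b) (e 0) (e 0) (e 1) = 1 ∧ Ften (br45 a b) (e 0) (e 1) (e 0) = 1 ∧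
    Ften (br45 a b) (e 0) (e 2) (e 3) = -1 ∧ Ften (br45 a b) (e 0) (e 3) (e 2) = -1 ∧
    Ften (br45 a b) (e 1) (e 1) (e 1) = 2 * a ∧ Ften (br45 a b) (e 1) (e 3) (e 3) = -(2 * a) ∧
    Ften (br45 a b) (e 2) (e 1) (e 2) = b ∧ Ften (br45 a b) (e 2) (e 2) (e 1) = b ∧
    Ften (br45 a b) (e 2) (e 3) (e 0) = -b ∧ Ften (br45 a b) (e 2) (e 0) (e 3) = -b ∧
    (∀ i j k : Fin 4, Ften (br45 a b) (e i) (e j) (e k) ≠ 0 →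
      (i, j, k) ∈ ({(0,0,1), (0,1,0), (0,2,3), (0,3,2), (1,1,1), (1,3,3),
        (2,1,2), (2,2,1), (2,3,0), (2,0,3)} : Set (Fin 4 × Fin 4 × Fin 4))) ∧
    theta (br45 a b) (e 1) = 2 * a + b + 1 ∧
    (∀ i : Fin 4, theta (br45 a b) (e i) ≠ 0 → i = 1) := by
  refine ⟨?_, ?_, ?_, ?_, ?_, ?_, ?_, ?_, ?_, ?_, fun i j k h => ?support,
    by simp [theta_br45, e_apply], fun i h => ?leeSupport⟩
  case support =>
    fin_cases i <;> fin_cases j <;> fin_cases k <;> simp [Ften_br45, e_apply] at h ⊢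
  case leeSupport =>
    simp only [theta_br45, e_apply, mul_ite, mul_one, mul_zero, ne_eq, ite_eq_right_iff,
      Classical.not_imp] at h
    exact h.1.symm
  all_goals simp [Ften_br45, e_apply]
end
end

section
/- For g₄,₅ with a = b = 1, the sectional curvature is constant: R(x,y,x,y) = g(x,x)g(y,y) − g(x,y)² for all x, y, i.e., R(x,y,z,u) = g(x,z)g(y,u) − g(x,u)g(y,z). -/
noncomputable section
open Matrix BigOperators

/-! With `a = b = 1` the bracket is `[x, y] = y₄ x' − x₄ y'`, where `x'` is the component of `x`
orthogonal to `e₄`, and the Koszul formula gives `∇ₓ y = y₄ x' − g(x', y') e₄`: this is real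
hyperbolic 4-space seen as a solvable Lie group.  Composing the connection, the curvature
endomorphism is `R(x, y) z = g(x, z) y − g(y, z) x`. -/

lemma br45_one_one_eq (x y : V) :
    br45 1 1 x y = ![x 0 * y 3 - x 3 * y 0, x 1 * y 3 - x 3 * y 1, x 2 * y 3 - x 3 * y 2, 0] := by
  funext k
  fin_cases k <;> simp [br45, e]

lemma koszul_br45_one_one_eq (x y : V) :
    koszul (br45 1 1) x y
      = ![x 0 * y 3, x 1 * y 3, x 2 * y 3, -(x 0 * y 0 + x 1 * y 1 + x 2 * y 2)] := by
  funext k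
  fin_cases k <;>
  · simp only [koszul, gdot, Fin.sum_univ_four, br45_one_one_eq, e, Pi.single_apply,
      Matrix.cons_val, Fin.reduceEq, ↓reduceIte, Fin.zero_eta, Fin.mk_one, Fin.reduceFinMk]
    ring

lemma curvatureEndomorphism_br45_one_one (x y z : V) :
    koszul (br45 1 1) x (koszul (br45 1 1) y z) - koszul (br45 1 1) y (koszul (br45 1 1) x z)
        - koszul (br45 1 1) (br45 1 1 x y) z = gdot x z • y - gdot y z • x := by
  funext k
  fin_cases k <;>
  · simp only [koszul_br45_one_one_eq, br45_one_one_eq, gdot, Fin.sum_univ_four, Pi.sub_apply,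
      Pi.smul_apply, smul_eq_mul, Matrix.cons_val, Fin.zero_eta, Fin.mk_one, Fin.reduceFinMk]
    ring

lemma gdot_sub_smul (a b : ℝ) (x y u : V) :
    gdot (a • y - b • x) u = a * gdot y u - b * gdot x u := by
  simp only [gdot, Pi.sub_apply, Pi.smul_apply, smul_eq_mul, sub_mul, Finset.sum_sub_distrib,
    mul_assoc, Finset.mul_sum]

theorem stmt14 :
    ∀ x y z u : V, curv (br45 1 1) x y z u = gdot x z * gdot y u - gdot x u * gdot y z := by
  intro x y z u
  rw [curv, curvatureEndomorphism_br45_one_one, gdot_sub_smul]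
  ring
end
end

section
/- For the Lie algebra g₄,₆ with orthonormal basis metric, the Levi-Civita connection satisfies ∇_{e₁}e₁=−a e₄, ∇_{e₁}e₄=a e₁, ∇_{e₂}e₂=−b e₄, ∇_{e₂}e₄=b e₂, ∇_{e₃}e₃=−b e₄, ∇_{e₃}e₄=b e₃, ∇_{e₄}e₂=e₃, ∇_{e₄}e₃=−e₂, and all other ∇_{eᵢ}e_j vanish. -/
noncomputable section
open Matrix BigOperators

/-! With an orthonormal basis the Koszul formula gives the connection directly from the
structure constants `c_{ij}^k = [eᵢ,eⱼ]ₖ`: the `k`-th component of `∇_{eᵢ}eⱼ` is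
`(c_{ij}^k + c_{ki}^j + c_{kj}^i) / 2`, which for g₄,₆ is evaluated entry by entry. -/

lemma gdot_e (x : V) (k : Fin 4) : gdot x (e k) = x k := by
  simp [gdot, e, Pi.single_apply]

lemma koszul_basis_apply (br : V → V → V) (i j k : Fin 4) :
    koszul br (e i) (e j) k = (br (e i) (e j) k + br (e k) (e i) j + br (e k) (e j) i) / 2 := by
  simp only [koszul, gdot_e]

lemma eq_koszul_of_two_mul_gdot_eq {br : V → V → V} {nab : Fin 4 → Fin 4 → V}
    (hK : ∀ i j k : Fin 4, 2 * gdot (nab i j) (e k) =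
      gdot (br (e i) (e j)) (e k) + gdot (br (e k) (e i)) (e j) + gdot (br (e k) (e j)) (e i))
    (i j : Fin 4) : nab i j = koszul br (e i) (e j) := by
  funext k
  have := hK i j k
  rw [gdot_e] at this
  simp only [koszul]
  linarith

def leviCivita46 (a b : ℝ) : Fin 4 → Fin 4 → V
  | 0, 0 => -(a • e 3)
  | 0, 3 => a • e 0
  | 1, 1 => -(b • e 3)
  | 1, 3 => b • e 1
  | 2, 2 => -(b • e 3)
  | 2, 3 => b • e 2
  | 3, 1 => e 2
  | 3, 2 => -e 1
  | _, _ => 0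

lemma koszul_br46_basis (a b : ℝ) (i j : Fin 4) :
    koszul (br46 a b) (e i) (e j) = leviCivita46 a b i j := by
  funext k
  rw [koszul_basis_apply]
  fin_cases i <;> fin_cases j <;> fin_cases k <;>
    simp [br46, leviCivita46, e]

theorem stmt15 (a b : ℝ) (nab : Fin 4 → Fin 4 → V)
    (hK : ∀ i j k : Fin 4, 2 * gdot (nab i j) (e k) =
      gdot (br46 a b (e i) (e j)) (e k) + gdot (br46 a b (e k) (e i)) (e j)
        + gdot (br46 a b (e k) (e j)) (e i)) :
    nab 0 0 = -(a • e 3) ∧ nab 0 3 = a • e 0 ∧ nab 1 1 = -(b • e 3) ∧ nab 1 3 = b • e 1 ∧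
    nab 2 2 = -(b • e 3) ∧ nab 2 3 = b • e 2 ∧ nab 3 1 = e 2 ∧ nab 3 2 = - e 1 ∧
    ∀ i j : Fin 4,
      (i, j) ∉ ({(0,0), (0,3), (1,1), (1,3), (2,2), (2,3), (3,1), (3,2)} :
        Set (Fin 4 × Fin 4)) →
      nab i j = 0 := by
  obtain rfl : nab = leviCivita46 a b :=
    funext₂ fun i j => (eq_koszul_of_two_mul_gdot_eq hK i j).trans (koszul_br46_basis a b i j)
  refine ⟨rfl, rfl, rfl, rfl, rfl, rfl, rfl, rfl, ?_⟩
  intro i j hij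
  fin_cases i <;> fin_cases j <;> first | rfl | simp at hij
end
end
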